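/- Let $T>0$, $M>0$, $\psi_0\ge 0$, and let $\psi:[0,T]\to[0,\infty)$ be absolutely continuous with $\psi(0)=\psi_0$. Suppose $\psi'(t)\le -M$ for a.e. $t$ in $A=\{t:\psi(t)>0\}$, and assume $M>\psi_0/T$. Then there exists $T^*\in[0,T)$ with $T^*\le \psi_0/M < T$ such that $\psi$ is strictly decreasing on $[0,T^*)$ and $\psi(t)=0$ for all $t\in[T^*,T]$. -/
import Mathlib


open MeasureTheory

/-- If `ψ : [0,T] → [0,∞)` is absolutely continuous with `ψ 0 = ψ₀ ≥ 0`,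
`ψ' ≤ -M` a.e. on `{ψ > 0}` with `M > ψ₀/T`, then there is `T* ∈ [0,T)` with
`T* ≤ ψ₀/M < T` such that `ψ` is strictly decreasing on `[0,T*)` and vanishes
on `[T*,T]`. -/
theorem sliding_lemma_part2 (T M ψ₀ : ℝ) (hT : 0 < T) (hM : 0 < M)
    (hψ₀ : 0 ≤ ψ₀) (hMT : ψ₀ / T < M)
    (ψ ψ' : ℝ → ℝ)
    (hψ0 : ψ 0 = ψ₀)
    (hnonneg : ∀ t ∈ Set.Icc (0:ℝ) T, 0 ≤ ψ t)
    (hcont : ContinuousOn ψ (Set.Icc 0 T))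
    (hint : IntervalIntegrable ψ' volume 0 T)
    (hftc : ∀ t₀ t₁, t₀ ∈ Set.Icc (0:ℝ) T → t₁ ∈ Set.Icc (0:ℝ) T → t₀ ≤ t₁ →
      ψ t₁ - ψ t₀ = ∫ s in t₀..t₁, ψ' s)
    (hderiv : ∀ᵐ t ∂(volume.restrict (Set.Icc (0:ℝ) T)),
      0 < ψ t → ψ' t ≤ -M) :
    ∃ Tstar ∈ Set.Ico (0:ℝ) T, Tstar ≤ ψ₀ / M ∧ ψ₀ / M < T ∧
      StrictAntiOn ψ (Set.Ico 0 Tstar) ∧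
      ∀ t ∈ Set.Icc Tstar T, ψ t = 0 := by
  -- key estimate: if ψ > 0 on (a,b) with a ≤ b in [0,T], then ψ b ≤ ψ a - M (b-a)
  have key : ∀ a b : ℝ, a ∈ Set.Icc (0:ℝ) T → b ∈ Set.Icc (0:ℝ) T → a ≤ b →
      (∀ t ∈ Set.Ioo a b, 0 < ψ t) → ψ b ≤ ψ a - M * (b - a) := by
    intro a b ha hb hab hpos
    have hsub : Set.Icc a b ⊆ Set.Icc (0:ℝ) T :=
      Set.Icc_subset_Icc ha.1 hb.2
    have hderiv' : ∀ᵐ t ∂(volume.restrict (Set.Icc a b)), 0 < ψ t → ψ' t ≤ -M :=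
      ae_restrict_of_ae_restrict_of_subset hsub hderiv
    have hIoo : ∀ᵐ t ∂(volume.restrict (Set.Icc a b)), t ∈ Set.Ioo a b := by
      rw [Measure.restrict_congr_set Ioo_ae_eq_Icc.symm]
      exact ae_restrict_mem measurableSet_Ioo
    have hle : (ψ' : ℝ → ℝ) ≤ᵐ[volume.restrict (Set.Icc a b)] fun _ => -M := by
      filter_upwards [hderiv', hIoo] with t ht hmem
      exact ht (hpos t hmem)
    have hint' : IntervalIntegrable ψ' volume a b := by
      apply hint.mono_set
      rw [Set.uIcc_of_le hab, Set.uIcc_of_le hT.le]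
      exact hsub
    have hintc : IntervalIntegrable (fun _ : ℝ => -M) volume a b :=
      intervalIntegrable_const
    have hI : ∫ s in a..b, ψ' s ≤ ∫ _ in a..b, (-M : ℝ) :=
      intervalIntegral.integral_mono_ae_restrict hab hint' hintc hle
    have hconst : ∫ _ in a..b, (-M : ℝ) = -M * (b - a) := by
      simp [intervalIntegral.integral_const, mul_comm]
    have := hftc a b ha hb hab
    linarith [hI, hconst ▸ hI]
  have hψ0T : ψ₀ < M * T := by
    rw [div_lt_iff₀ hT] at hMT; linarith
  have hdivT : ψ₀ / M < T := by rwa [div_lt_iff₀ hM, mul_comm]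
  -- the zero set
  set Z : Set ℝ := Set.Icc 0 T ∩ ψ ⁻¹' {0} with hZ
  have hZclosed : IsClosed Z :=
    hcont.preimage_isClosed_of_isClosed isClosed_Icc isClosed_singleton
  have hZne : Z.Nonempty := by
    by_contra hne
    have hpos : ∀ t ∈ Set.Ioo (0:ℝ) T, 0 < ψ t := by
      intro t ht
      have htm : t ∈ Set.Icc (0:ℝ) T := ⟨ht.1.le, ht.2.le⟩
      rcases lt_or_eq_of_le (hnonneg t htm) with h | h
      · exact h
      · exact absurd ⟨htm, h.symm⟩ (fun hmem => hne ⟨t, hmem⟩)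
    have := key 0 T ⟨le_refl 0, hT.le⟩ ⟨hT.le, le_refl T⟩ hT.le hpos
    have hTnn := hnonneg T ⟨hT.le, le_refl T⟩
    rw [hψ0] at this
    nlinarith
  have hZbdd : BddBelow Z := ⟨0, fun x hx => hx.1.1⟩
  set Tstar := sInf Z with hTs
  have hTsZ : Tstar ∈ Z := hZclosed.csInf_mem hZne hZbdd
  have hTs0 : 0 ≤ Tstar := hTsZ.1.1
  have hTsT : Tstar ≤ T := hTsZ.1.2
  have hψTs : ψ Tstar = 0 := hTsZ.2
  have hposIco : ∀ t ∈ Set.Ico (0:ℝ) Tstar, 0 < ψ t := by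
    intro t ht
    have htm : t ∈ Set.Icc (0:ℝ) T := ⟨ht.1, ht.2.le.trans hTsT⟩
    rcases lt_or_eq_of_le (hnonneg t htm) with h | h
    · exact h
    · exact absurd (csInf_le hZbdd ⟨htm, h.symm⟩) (not_le.mpr ht.2)
  have hkey0 : ψ Tstar ≤ ψ₀ - M * (Tstar - 0) := by
    rw [← hψ0]
    exact key 0 Tstar ⟨le_refl 0, hT.le⟩ ⟨hTs0, hTsT⟩ hTs0
      (fun t ht => hposIco t ⟨ht.1.le, ht.2⟩)
  have hTsle : Tstar ≤ ψ₀ / M := by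
    rw [le_div_iff₀ hM]
    rw [hψTs] at hkey0
    nlinarith
  have hTsltT : Tstar < T := lt_of_le_of_lt hTsle hdivT
  refine ⟨Tstar, ⟨hTs0, hTsltT⟩, hTsle, hdivT, ?_, ?_⟩
  · intro a ha b hb hab
    have hkey := key a b ⟨ha.1, ha.2.le.trans hTsT⟩ ⟨hb.1, hb.2.le.trans hTsT⟩ hab.le
      (fun t ht => hposIco t ⟨ha.1.trans ht.1.le, ht.2.trans hb.2⟩)
    nlinarith
  · intro t ht
    by_contra hne
    have htm : t ∈ Set.Icc (0:ℝ) T := ⟨hTs0.trans ht.1, ht.2⟩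
    have htpos : 0 < ψ t := (hnonneg t htm).lt_of_ne (Ne.symm hne)
    set W : Set ℝ := Set.Icc Tstar t ∩ ψ ⁻¹' {0} with hW
    have hWclosed : IsClosed W :=
      (hcont.mono (Set.Icc_subset_Icc hTs0 ht.2)).preimage_isClosed_of_isClosed
        isClosed_Icc isClosed_singleton
    have hWne : W.Nonempty := ⟨Tstar, ⟨le_refl _, ht.1⟩, hψTs⟩
    have hWbdd : BddAbove W := ⟨t, fun x hx => hx.1.2⟩
    set s := sSup W with hs
    have hsW : s ∈ W := hWclosed.csSup_mem hWne hWbdd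
    have hst : s ≤ t := hsW.1.2
    have hψs : ψ s = 0 := hsW.2
    have hslt : s < t := hst.lt_of_ne (fun h => hne (h ▸ hψs))
    have hpos : ∀ u ∈ Set.Ioo s t, 0 < ψ u := by
      intro u hu
      have hum : u ∈ Set.Icc (0:ℝ) T :=
        ⟨hTs0.trans (hsW.1.1.trans hu.1.le), hu.2.le.trans ht.2⟩
      rcases lt_or_eq_of_le (hnonneg u hum) with h | h
      · exact h
      · exact absurd (le_csSup hWbdd ⟨⟨hsW.1.1.trans hu.1.le, hu.2.le⟩, h.symm⟩)
          (not_le.mpr hu.1)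
    have hkey := key s t ⟨hTs0.trans hsW.1.1, hst.trans ht.2⟩ htm hst hpos
    rw [hψs] at hkey
    nlinarith
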